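/- arXiv:2602.19464 — 3 statements merged into one kernel-verified Lean document; each statement's English description precedes it below -/
import Mathlib

section
/- For m ≥ r ≥ 2, the Stirling partition number satisfies S(m,r) ≥ (2^((m-1)/(r-1)) - 1)·S(m-1,r-1). -/
/-- Stirling number of the second kind: number of partitions of an `n`-set into
`k` nonempty blocks. -/
def stirling : ℕ → ℕ → ℕ
  | 0, 0 => 1
  | 0, _ + 1 => 0
  | _ + 1, 0 => 0
  | n + 1, k + 1 => stirling n k + (k + 1) * stirling n (k + 1)

/-- `T n k` is `k * (S(n+1,k+1) + S(n,k))`; combinatorially it is the sum, over all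
partitions of an `n`-set into `k` blocks, of `Σᵢ 2^(size of block i)`. -/
def T (n k : ℕ) : ℕ := k * (stirling (n+1) (k+1) + stirling n k)

lemma T_rec (n k : ℕ) :
    T (n+1) (k+1) = T n k + 2 * stirling n k + (k+2) * T n (k+1) := by
  simp only [T, stirling]; ring

lemma stirling_eq_zero : ∀ n k : ℕ, n < k → stirling n k = 0 := by
  intro n
  induction n with
  | zero => intro k hk; match k, hk with | k+1, _ => rfl
  | succ n ih =>
    intro k hk
    match k, hk with
    | k+1, hk => simp [stirling, ih k (by omega), ih (k+1) (by omega)]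

lemma stirling_self (n : ℕ) : stirling n n = 1 := by
  induction n with
  | zero => rfl
  | succ n ih => simp [stirling, ih, stirling_eq_zero n (n+1) (by omega)]

lemma stirling_one (n : ℕ) : stirling (n+1) 1 = 1 := by
  induction n with
  | zero => rfl
  | succ n ih => simpa [stirling] using ih

lemma T_one (n : ℕ) : T (n+1) 1 = 2 ^ (n+1) := by
  induction n with
  | zero => rfl
  | succ n ih =>
    have h0 : T (n+1) 0 = 0 := by simp [T]
    have h := T_rec (n+1) 0
    rw [h0, show stirling (n+1) 0 = 0 from rfl] at h
    norm_num at h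
    have hp : (2:ℕ) ^ (n+1+1) = 2 ^ (n+1) * 2 := pow_succ 2 (n+1)
    omega

lemma rpow_inv_nat_le (m : ℕ) (hm : 1 ≤ m) : (m:ℝ) * 2 ^ ((1:ℝ)/m) ≤ m + 1 := by
  have hm0 : (0:ℝ) < m := by exact_mod_cast hm
  have hb : (2:ℝ) ≤ (1 + 1/m) ^ (m:ℕ) := by
    have h := one_add_mul_le_pow
      (a := 1/(m:ℝ)) (le_trans (by norm_num : (-2:ℝ) ≤ 0) (by positivity)) m
    rw [mul_one_div, div_self (ne_of_gt hm0)] at h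
    linarith
  have h2 : (2:ℝ) ^ ((1:ℝ)/m) ≤ 1 + 1/m := by
    have h := Real.rpow_le_rpow (by norm_num) hb (by positivity : (0:ℝ) ≤ 1/m)
    rwa [← Real.rpow_natCast (1 + 1/(m:ℝ)) m, ← Real.rpow_mul (by positivity),
      mul_one_div, div_self (ne_of_gt hm0), Real.rpow_one] at h
  calc (m:ℝ) * 2 ^ ((1:ℝ)/m) ≤ m * (1 + 1/m) := mul_le_mul_of_nonneg_left h2 hm0.le
    _ = m + 1 := by field_simp

lemma ineqB (n j : ℕ) :
    ((j:ℝ)+2) * 2 ^ (((n:ℝ)+1)/((j:ℝ)+2)) ≤ ((j:ℝ)+3) * 2 ^ ((n:ℝ)/((j:ℝ)+2)) := by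
  have key := rpow_inv_nat_le (j+2) (by omega)
  push_cast at key
  have hsplit : (2:ℝ) ^ (((n:ℝ)+1)/((j:ℝ)+2))
      = 2 ^ ((n:ℝ)/((j:ℝ)+2)) * 2 ^ ((1:ℝ)/((j:ℝ)+2)) := by
    rw [← Real.rpow_add (by norm_num)]
    ring_nf
  have hpos : (0:ℝ) < 2 ^ ((n:ℝ)/((j:ℝ)+2)) := Real.rpow_pos_of_pos (by norm_num) _
  rw [hsplit]
  nlinarith

lemma ineqA (n j : ℕ) :
    ((j:ℝ)+2) * 2 ^ (((n:ℝ)+1)/((j:ℝ)+2)) ≤ ((j:ℝ)+1) * 2 ^ ((n:ℝ)/((j:ℝ)+1)) + 2 := by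
  have hJ : (0:ℝ) < (j:ℝ)+2 := by positivity
  have h := Real.geom_mean_le_arith_mean2_weighted
    (w₁ := ((j:ℝ)+1)/((j:ℝ)+2)) (w₂ := 1/((j:ℝ)+2))
    (p₁ := 2 ^ ((n:ℝ)/((j:ℝ)+1))) (p₂ := 2)
    (by positivity) (by positivity)
    (Real.rpow_pos_of_pos (by norm_num) _).le (by norm_num)
    (by field_simp; ring)
  have heq : ((2:ℝ) ^ ((n:ℝ)/((j:ℝ)+1))) ^ (((j:ℝ)+1)/((j:ℝ)+2)) * (2:ℝ) ^ ((1:ℝ)/((j:ℝ)+2))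
      = 2 ^ (((n:ℝ)+1)/((j:ℝ)+2)) := by
    rw [← Real.rpow_mul (by norm_num : (0:ℝ) ≤ 2),
        ← Real.rpow_add (by norm_num : (0:ℝ) < 2)]
    congr 1
    field_simp
  rw [heq] at h
  calc ((j:ℝ)+2) * 2 ^ (((n:ℝ)+1)/((j:ℝ)+2))
      ≤ ((j:ℝ)+2) * (((j:ℝ)+1)/((j:ℝ)+2) * 2 ^ ((n:ℝ)/((j:ℝ)+1)) + 1/((j:ℝ)+2) * 2) :=
        mul_le_mul_of_nonneg_left h hJ.le
    _ = ((j:ℝ)+1) * 2 ^ ((n:ℝ)/((j:ℝ)+1)) + 2 := by field_simp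

lemma key_ineq : ∀ n k : ℕ, 1 ≤ k → k ≤ n →
    (k : ℝ) * 2 ^ ((n:ℝ)/(k:ℝ)) * (stirling n k : ℝ) ≤ (T n k : ℝ) := by
  intro n
  induction n with
  | zero => intro k h1 h2; omega
  | succ n ih =>
    intro k hk hkn
    match k, hk with
    | 1, _ =>
      rw [T_one n, stirling_one n]
      rw [show ((n+1:ℕ):ℝ)/((1:ℕ):ℝ) = ((n+1:ℕ):ℝ) by norm_num]
      rw [Real.rpow_natCast]
      push_cast
      norm_num
    | (j+2), _ =>
      rcases eq_or_lt_of_le hkn with heq | hlt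
      · -- boundary case n + 1 = j + 2
        have hn : n = j+1 := by omega
        subst hn
        rw [stirling_self]
        have hT : T (j+2) (j+2) = (j+2) * 2 := by
          simp [T, stirling_self]
        rw [hT]
        have hd : ((j+1+1:ℕ):ℝ)/((j+2:ℕ):ℝ) = 1 := by
          have : ((j+1+1:ℕ):ℝ) = ((j+2:ℕ):ℝ) := by push_cast; ring
          rw [this, div_self (by positivity)]
        rw [hd, Real.rpow_one]
        push_cast
        try norm_num
        try linarith
      · -- inductive step
        have hjn : j+2 ≤ n := by omega
        have h1 := ih (j+1) (by omega) (by omega)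
        have h2 := ih (j+2) (by omega) hjn
        have hrec := T_rec n (j+1)
        have hst : stirling (n+1) (j+2) = stirling n (j+1) + (j+2) * stirling n (j+2) := rfl
        have hA := ineqA n j
        have hB := ineqB n j
        have hrec' : T (n+1) (j+2)
            = T n (j+1) + 2 * stirling n (j+1) + (j+3) * T n (j+2) := T_rec n (j+1)
        rw [hst, hrec']
        push_cast
        push_cast at h1 h2
        set s1 := (stirling n (j+1) : ℝ) with hs1def
        set s2 := (stirling n (j+2) : ℝ) with hs2def
        have hs1 : (0:ℝ) ≤ s1 := by rw [hs1def]; positivity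
        have hs2 : (0:ℝ) ≤ s2 := by rw [hs2def]; positivity
        set P := (2:ℝ) ^ (((n:ℝ)+1)/((j:ℝ)+2)) with hP
        set Q1 := (2:ℝ) ^ ((n:ℝ)/((j:ℝ)+1)) with hQ1
        set Q2 := (2:ℝ) ^ ((n:ℝ)/((j:ℝ)+2)) with hQ2
        have e1 : ((j:ℝ)+2) * P * s1 ≤ (T n (j+1) : ℝ) + 2 * s1 := by
          have := mul_le_mul_of_nonneg_right hA hs1
          nlinarith [h1]
        have e2 : ((j:ℝ)+2) * P * (((j:ℝ)+2) * s2) ≤ ((j:ℝ)+3) * (T n (j+2) : ℝ) := by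
          have hb := mul_le_mul_of_nonneg_right hB (mul_nonneg (by positivity) hs2 :
            (0:ℝ) ≤ ((j:ℝ)+2) * s2)
          nlinarith [h2]
        nlinarith [e1, e2]

theorem stmt_3 (m r : ℕ) (hr : 2 ≤ r) (hmr : r ≤ m) :
    (stirling m r : ℝ) ≥
      ((2 : ℝ) ^ (((m : ℝ) - 1) / ((r : ℝ) - 1)) - 1) * stirling (m - 1) (r - 1) := by
  obtain ⟨k, rfl⟩ : ∃ k, r = k+1 := ⟨r-1, by omega⟩
  obtain ⟨n, rfl⟩ : ∃ n, m = n+1 := ⟨m-1, by omega⟩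
  have hk : 1 ≤ k := by omega
  have hkn : k ≤ n := by omega
  have h := key_ineq n k hk hkn
  simp only [Nat.add_sub_cancel]
  have hc1 : ((n+1:ℕ):ℝ) - 1 = (n:ℝ) := by push_cast; ring
  have hc2 : ((k+1:ℕ):ℝ) - 1 = (k:ℝ) := by push_cast; ring
  rw [ge_iff_le, hc1, hc2]
  have hkpos : (0:ℝ) < k := by exact_mod_cast hk
  rw [T] at h
  push_cast at h
  set P := (2:ℝ) ^ ((n:ℝ)/(k:ℝ))
  have h2 : P * (stirling n k : ℝ) ≤ (stirling (n+1) (k+1) : ℝ) + (stirling n k : ℝ) := by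
    have hmul : (k:ℝ) * (P * (stirling n k : ℝ))
        ≤ (k:ℝ) * ((stirling (n+1) (k+1) : ℝ) + (stirling n k : ℝ)) := by nlinarith [h]
    exact le_of_mul_le_mul_left hmul hkpos
  nlinarith [h2]
end

section
/- Let j ≥ k ≥ t+2 and 0 ≤ s ≤ k-t-2, and let L(j,t) = (t+1) + (j-t+1)·log₂((t+1)(j-t+1)). If n ≥ L(j,t) - 1, then S(n-t-s, k-t-s) > (t+1)·(j-t+1)·S(n-t-s-1, k-t-s-1). -/
/-- `L(k,t) = (t+1) + (k-t+1)·log₂((t+1)(k-t+1))`. -/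
noncomputable def Lfun (k t : ℕ) : ℝ :=
  ((t : ℝ) + 1) + ((k : ℝ) - t + 1) * Real.logb 2 (((t : ℝ) + 1) * ((k : ℝ) - t + 1))

theorem stirling_eq_stirlingSecond : stirling = Nat.stirlingSecond := by
  funext n k
  induction n generalizing k with
  | zero => cases k <;> rfl
  | succ n ih =>
    cases k with
    | zero => rfl
    | succ k => rw [stirling, Nat.stirlingSecond_succ_succ, ih, ih, add_comm]

namespace Nat

theorem stirlingSecond_pos {n k : ℕ} (hk : 0 < k) (hkn : k ≤ n) : 0 < stirlingSecond n k := by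
  induction n generalizing k with
  | zero => omega
  | succ n ih =>
    obtain ⟨k, rfl⟩ := Nat.exists_eq_add_of_le' hk
    rw [stirlingSecond_succ_succ]
    rcases (Nat.succ_le_succ_iff.1 hkn).lt_or_eq with hlt | rfl
    · have := ih k.succ_pos hlt
      positivity
    · simp [stirlingSecond_self]

theorem succ_pow_mul_stirlingSecond_le (b c : ℕ) :
    (b + 1) ^ c * stirlingSecond (b + c) b ≤ b ^ c * stirlingSecond (b + c + 1) (b + 1) := by
  induction c generalizing b with
  | zero => simp [stirlingSecond_self]
  | succ c ihc =>
    induction b with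
    | zero => simp
    | succ b ihb =>
      -- Expand both sides by the recurrence and compare term by term, the `S(·, b)` term through
      -- `ihb` and `b (b + 2) ≤ (b + 1)²`, the `S(·, b + 1)` term through `ihc`.
      have hsq : b ^ (c + 1) * (b + 2) ^ (c + 1) ≤ (b + 1) ^ (c + 1) * (b + 1) ^ (c + 1) := by
        rw [← Nat.mul_pow, ← Nat.mul_pow]
        exact Nat.pow_le_pow_left (by nlinarith) _
      have hlow : (b + 2) ^ (c + 1) * stirlingSecond (b + c + 1) b ≤
          (b + 1) ^ (c + 1) * stirlingSecond (b + c + 2) (b + 1) := by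
        refine Nat.le_of_mul_le_mul_left ?_ (Nat.pow_pos (Nat.succ_pos b) : 0 < (b + 1) ^ (c + 1))
        calc (b + 1) ^ (c + 1) * ((b + 2) ^ (c + 1) * stirlingSecond (b + c + 1) b)
            = (b + 2) ^ (c + 1) * ((b + 1) ^ (c + 1) * stirlingSecond (b + (c + 1)) b) := by
              rw [show b + (c + 1) = b + c + 1 by ring]; ring
          _ ≤ (b + 2) ^ (c + 1) * (b ^ (c + 1) * stirlingSecond (b + (c + 1) + 1) (b + 1)) :=
              Nat.mul_le_mul_left _ ihb
          _ = b ^ (c + 1) * (b + 2) ^ (c + 1) * stirlingSecond (b + c + 2) (b + 1) := by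
              rw [show b + (c + 1) + 1 = b + c + 2 by ring]; ring
          _ ≤ (b + 1) ^ (c + 1) * (b + 1) ^ (c + 1) * stirlingSecond (b + c + 2) (b + 1) :=
              Nat.mul_le_mul_right _ hsq
          _ = _ := by ring
      have hhigh : (b + 2) ^ (c + 1) * ((b + 1) * stirlingSecond (b + c + 1) (b + 1)) ≤
          (b + 1) ^ (c + 1) * ((b + 2) * stirlingSecond (b + c + 2) (b + 2)) := by
        have := Nat.mul_le_mul_left ((b + 1) * (b + 2)) (ihc (b + 1))
        rw [show b + 1 + c = b + c + 1 by ring, show b + c + 1 + 1 = b + c + 2 by ring] at this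
        calc _ = (b + 1) * (b + 2) * ((b + 1 + 1) ^ c * stirlingSecond (b + c + 1) (b + 1)) := by ring
          _ ≤ _ := this
          _ = _ := by ring
      rw [show b + 1 + (c + 1) = b + c + 1 + 1 by ring, stirlingSecond_succ_succ (b + c + 1) b,
        stirlingSecond_succ_succ (b + c + 1 + 1) (b + 1), mul_add, mul_add]
      exact Nat.add_le_add hhigh hlow

theorem mul_stirlingSecond_lt {C b c : ℕ} (hb : 0 < b) (hC : C * b ^ c < (b + 1) ^ c) :
    C * stirlingSecond (b + c) b < stirlingSecond (b + c + 1) (b + 1) := by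
  have hS := stirlingSecond_pos hb (Nat.le_add_right b c)
  refine Nat.lt_of_mul_lt_mul_right (a := b ^ c) ?_
  calc C * stirlingSecond (b + c) b * b ^ c = C * b ^ c * stirlingSecond (b + c) b := by ring
    _ < (b + 1) ^ c * stirlingSecond (b + c) b := Nat.mul_lt_mul_of_pos_right hC hS
    _ ≤ b ^ c * stirlingSecond (b + c + 1) (b + 1) := succ_pow_mul_stirlingSecond_le b c
    _ = _ := by ring

end Nat

namespace Real

theorem div_lt_log_one_add_of_pos {u : ℝ} (hu : 0 < u) : 25 * u / (11 * u + 36) < log (1 + u) := by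
  let f : ℝ → ℝ := fun x => log (1 + x) - 25 * x / (11 * x + 36)
  have hderiv : ∀ x, 0 ≤ x → HasDerivAt f (1 / (1 + x) - 900 / (11 * x + 36) ^ 2) x := by
    intro x hx
    have hlog : HasDerivAt (fun x => log (1 + x)) (1 / (1 + x)) x := by
      simpa using ((hasDerivAt_id' x).const_add 1).log (by positivity)
    have hfrac : HasDerivAt (fun x => 25 * x / (11 * x + 36)) (900 / (11 * x + 36) ^ 2) x :=
      (((hasDerivAt_id' x).const_mul 25).div (((hasDerivAt_id' x).const_mul 11).add_const 36)
        (by positivity)).congr_deriv (by ring)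
    exact hlog.sub hfrac
  have hmono : StrictMonoOn f (Set.Ici 0) := by
    refine strictMonoOn_of_deriv_pos (convex_Ici 0)
      (HasDerivAt.continuousOn fun x hx => hderiv x hx) fun x hx => ?_
    rw [interior_Ici, Set.mem_Ioi] at hx
    rw [(hderiv x hx.le).deriv, sub_pos, div_lt_div_iff₀ (by positivity) (by positivity)]
    nlinarith [sq_nonneg (11 * x - 5)]
  simpa [f] using hmono Set.self_mem_Ici hu.le hu

theorem mul_pow_lt_add_one_pow {C b u : ℝ} {N : ℕ} (hC : 0 < C) (hb : 0 < b) (hbu : b + 1 ≤ u)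
    (hN : u * log C < N) : C * b ^ N < (b + 1) ^ N := by
  have hu : 0 < u := by linarith
  have hstep : 1 / (b + 1) ≤ log ((b + 1) / b) := by
    have := one_sub_inv_le_log_of_pos (x := (b + 1) / b) (by positivity)
    rwa [inv_div, one_sub_div (by positivity), add_sub_cancel_left] at this
  have hlog : log C < N * log ((b + 1) / b) :=
    calc log C < N / u := by rwa [lt_div_iff₀ hu, mul_comm]
      _ ≤ N / (b + 1) := div_le_div_of_nonneg_left (Nat.cast_nonneg N) (by positivity) hbu
      _ ≤ N * log ((b + 1) / b) := by
        rw [div_eq_mul_one_div]; exact mul_le_mul_of_nonneg_left hstep (Nat.cast_nonneg N)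
  rw [← log_pow, log_lt_log_iff hC (by positivity), div_pow, lt_div_iff₀ (by positivity)] at hlog
  exact hlog

theorem mul_one_add_log_lt_mul_logb {u C : ℝ} (hu : 0 < u) (hC : u + 1 ≤ C) :
    u * (1 + log C) < (u + 1) * logb 2 C := by
  have hx : 25 * u / (11 * u + 36) < log C :=
    (div_lt_log_one_add_of_pos hu).trans_le (log_le_log (by positivity) (by linarith))
  rw [div_lt_iff₀ (by positivity)] at hx
  have hlog2 : log 2 < 25 / 36 := by linarith [log_two_lt_d9]
  have hlog2pos : 0 < log 2 := log_pos one_lt_two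
  have hxpos : 0 < log C := by nlinarith
  rw [logb, mul_div_assoc', lt_div_iff₀ hlog2pos]
  nlinarith [mul_lt_mul_of_pos_left hlog2 (mul_pos hu hxpos)]

end Real

open Real in
theorem stmt_9 (n j k t s : ℕ) (hjk : k ≤ j) (hkt : t + 2 ≤ k)
    (hs : s ≤ k - t - 2) (hn : (n : ℝ) ≥ Lfun j t - 1) :
    stirling (n - t - s) (k - t - s) >
      (t + 1) * (j - t + 1) * stirling (n - t - s - 1) (k - t - s - 1) := by
  set C := (t + 1) * (j - t + 1)
  have hCR : (C : ℝ) = ((t : ℝ) + 1) * ((j : ℝ) - t + 1) := by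
    push_cast [C, Nat.cast_sub (by omega : t ≤ j)]; ring
  set u : ℝ := (k : ℝ) - t
  have hu : 2 ≤ u := by
    have : (t : ℝ) + 2 ≤ k := by exact_mod_cast hkt
    linarith
  have huj : u ≤ (j : ℝ) - t := by
    have : (k : ℝ) ≤ j := by exact_mod_cast hjk
    linarith
  have huC : u + 1 ≤ C := by rw [hCR]; nlinarith [(Nat.cast_nonneg (α := ℝ) t)]
  have hthreshold : u * log C < n - k := by
    have hlogb : (u + 1) * logb 2 C ≤ ((j : ℝ) - t + 1) * logb 2 C :=
      mul_le_mul_of_nonneg_right (by linarith) (logb_nonneg one_lt_two (by linarith))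
    rw [Lfun, ← hCR] at hn
    linarith [mul_one_add_log_lt_mul_logb (by linarith) huC]
  obtain ⟨c, rfl⟩ : ∃ c, n = k + c := by
    refine Nat.exists_eq_add_of_le (Nat.cast_le (α := ℝ).1 ?_)
    nlinarith [log_nonneg (show (1 : ℝ) ≤ C by linarith)]
  obtain ⟨b, hb⟩ : ∃ b, k - t - s = b + 1 := ⟨k - t - s - 1, by omega⟩
  rw [stirling_eq_stirlingSecond, hb, show k + c - t - s = b + c + 1 by omega,
    Nat.add_sub_cancel, Nat.add_sub_cancel]
  refine Nat.mul_stirlingSecond_lt (by omega) ?_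
  have hbu : (b : ℝ) + 1 ≤ u := by
    simp only [u]; rw [← Nat.cast_sub (by omega : t ≤ k)]; exact_mod_cast (by omega : b + 1 ≤ k - t)
  have := mul_pow_lt_add_one_pow (C := C) (N := c) (by linarith)
    (by exact_mod_cast (by omega : 0 < b)) hbu
    (by push_cast at hthreshold; linarith)
  exact_mod_cast this
end

section
/- Let k ≥ t+2, s ∈ [t+2, k], and n ≥ L(k,t) = (t+1) + (k-t+1)·log₂((t+1)(k-t+1)). Let h(s,k,t,n) be the number of k-partitions F of [n] with |F ∩ M| ≥ t, where M is the partition consisting of s fixed singletons {1},...,{s} of [n]. Then h(s,k,t,n) ≥ (1/6)·C(s,t)·S(n-t, k-t). -/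
/-- `P` is a partition of `[n]` into `k` pairwise disjoint nonempty blocks. -/
def IsKPartition (n k : ℕ) (P : Finset (Finset (Fin n))) : Prop :=
  P.card = k ∧ (∀ B ∈ P, B.Nonempty) ∧
    (∀ B ∈ P, ∀ C ∈ P, B ≠ C → Disjoint B C) ∧ P.sup id = Finset.univ

/-!
A `t`-subset `T` of `S = {0, …, s-1}` and a `(k-t)`-partition `G` of the other `n - t` points
in which no point of `S \ T` is a singleton block give the `k`-partition `{{i} | i ∈ T} ∪ G`,
which has at least `t` blocks in common with `M`; `T` and `G` are recovered from it. It remains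
to show that there are at least `S(n-t, k-t) / 6` such `G`. Colour the `m = n - t` points with
`j = k - t` colours. A colouring that is not surjective, or leaves a point of `S \ T` alone in its
colour class, is one of at most `j (j-1)^m + j · j (j-1)^(m-1)` colourings, and `L(k,t) ≤ n` makes
this at most `5/6` of all `j^m` colourings, because `(1 - 1/j)^(m-1) ≤ exp (-(m-1)/j)`. Every
partition is the partition into colour classes of at most `j!` colourings, and `j! S(m,j) ≤ j^m`.
-/

open Finset Real
open scoped Nat

theorem sum_descFactorial_mul_stirling (j m : ℕ) :
    ∑ i ∈ range (j + 1), j.descFactorial i * stirling m i = j ^ m := by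
  induction m with
  | zero =>
    rw [sum_eq_single 0 (fun i _ hi => by cases i <;> simp_all [stirling]) (by simp)]
    simp [stirling]
  | succ m ih =>
    have hterm : ∀ i ∈ range (j + 1), j.descFactorial (i + 1) * stirling m i
        + j.descFactorial i * (i * stirling m i) = j * (j.descFactorial i * stirling m i) := by
      intro i hi
      rw [Nat.descFactorial_succ]
      calc (j - i) * j.descFactorial i * stirling m i + j.descFactorial i * (i * stirling m i)
          = (j - i + i) * (j.descFactorial i * stirling m i) := by ring
        _ = j * (j.descFactorial i * stirling m i) := by
          rw [Nat.sub_add_cancel (by simpa [Nat.lt_succ_iff] using hi)]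
    calc ∑ i ∈ range (j + 1), j.descFactorial i * stirling (m + 1) i
        = ∑ i ∈ range j, j.descFactorial (i + 1) * stirling (m + 1) (i + 1) := by
          rw [sum_range_succ']; simp [stirling]
      _ = ∑ i ∈ range j, j.descFactorial (i + 1) * stirling m i
          + ∑ i ∈ range j, j.descFactorial (i + 1) * ((i + 1) * stirling m (i + 1)) := by
          rw [← sum_add_distrib]
          exact sum_congr rfl fun i _ => by rw [stirling]; ring
      _ = ∑ i ∈ range (j + 1), j.descFactorial (i + 1) * stirling m i
          + ∑ i ∈ range (j + 1), j.descFactorial i * (i * stirling m i) := by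
          rw [sum_range_succ _ j, Nat.descFactorial_of_lt (by omega : j < j + 1),
            sum_range_succ' (fun i => j.descFactorial i * (i * stirling m i))]
          simp
      _ = j ^ (m + 1) := by rw [← sum_add_distrib, sum_congr rfl hterm, ← mul_sum, ih, pow_succ']

theorem factorial_mul_stirling_le_pow (j m : ℕ) : j ! * stirling m j ≤ j ^ m := by
  rw [← sum_descFactorial_mul_stirling, ← Nat.descFactorial_self]
  exact single_le_sum (f := fun i => j.descFactorial i * stirling m i)
    (fun _ _ => Nat.zero_le _) (self_mem_range_succ j)

theorem pow_seven_mul_le {j : ℕ} (hj : 1 ≤ j) :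
    6 ^ 7 * (2 * j - 1) ^ 7 ≤ 5 ^ 7 * (j + 1) ^ 10 := by
  rcases le_or_gt j 6 with h | h
  · interval_cases j <;> norm_num
  · calc 6 ^ 7 * (2 * j - 1) ^ 7 ≤ 6 ^ 7 * (2 * (j + 1)) ^ 7 := by gcongr; omega
      _ = 6 ^ 7 * 2 ^ 7 * (j + 1) ^ 7 := by ring
      _ ≤ 5 ^ 7 * 8 ^ 3 * (j + 1) ^ 7 := Nat.mul_le_mul_right _ (by norm_num)
      _ ≤ 5 ^ 7 * (j + 1) ^ 3 * (j + 1) ^ 7 :=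
          Nat.mul_le_mul_right _ (Nat.mul_le_mul_left _ (Nat.pow_le_pow_left (by omega) 3))
      _ = 5 ^ 7 * (j + 1) ^ 10 := by ring

theorem sub_one_mul_exp_inv_le {x : ℝ} (hx : 0 < x) : (x - 1) * exp x⁻¹ ≤ x :=
  calc (x - 1) * exp x⁻¹ = x * (-x⁻¹ + 1) * exp x⁻¹ := by field_simp; ring
    _ ≤ x * exp (-x⁻¹) * exp x⁻¹ := by gcongr; exact add_one_le_exp _
    _ = x := by rw [mul_assoc, ← exp_add]; simp

theorem six_mul_two_mul_sub_one_le_five_mul_exp {j M : ℕ} (hj : 1 ≤ j)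
    (hM : ((j : ℝ) + 1) * logb 2 (j + 1) ≤ M) :
    6 * (2 * (j : ℝ) - 1) ≤ 5 * exp (M / j) := by
  have hx : (1 : ℝ) ≤ j := by exact_mod_cast hj
  -- `1 / log 2 > 10 / 7`, which is where the `(j + 1) ^ 10` below comes from
  have hexp : 10 * log (j + 1) ≤ 7 * ((M : ℝ) / j) := by
    have hlog2 : log 2 < 7 / 10 := by linarith [log_two_lt_d9]
    have hl : 0 ≤ log ((j : ℝ) + 1) := log_nonneg (by linarith)
    rw [logb, ← mul_div_assoc, div_le_iff₀ (log_pos one_lt_two)] at hM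
    rw [mul_div_assoc', le_div_iff₀ (by linarith)]
    nlinarith
  have hcast : ((6 ^ 7 * (2 * j - 1) ^ 7 : ℕ) : ℝ) ≤ ((5 ^ 7 * (j + 1) ^ 10 : ℕ) : ℝ) := by
    exact_mod_cast pow_seven_mul_le hj
  push_cast [Nat.cast_sub (show 1 ≤ 2 * j by omega)] at hcast
  refine le_of_pow_le_pow_left₀ (n := 7) (by norm_num) (by positivity) ?_
  calc (6 * (2 * (j : ℝ) - 1)) ^ 7 ≤ 5 ^ 7 * (j + 1) ^ 10 := by linarith
    _ = 5 ^ 7 * exp (10 * log (j + 1)) := by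
        rw [show (10 : ℝ) = (10 : ℕ) by norm_num, exp_nat_mul, exp_log (by linarith)]
    _ ≤ 5 ^ 7 * exp (7 * ((M : ℝ) / j)) := by gcongr
    _ = (5 * exp ((M : ℝ) / j)) ^ 7 := by
        rw [mul_pow, show (7 : ℝ) = (7 : ℕ) by norm_num, exp_nat_mul]

theorem six_mul_two_mul_sub_one_mul_pow_le {j M : ℕ} (hj : 1 ≤ j)
    (hM : ((j : ℝ) + 1) * logb 2 (j + 1) ≤ M) :
    6 * (2 * j - 1) * (j - 1) ^ M ≤ 5 * j ^ M := by
  have hx : (0 : ℝ) < j := by exact_mod_cast hj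
  have hpow : ((j : ℝ) - 1) ^ M * exp (M / j) ≤ j ^ M := by
    rw [div_eq_mul_inv, exp_nat_mul, ← mul_pow]
    exact pow_le_pow_left₀ (mul_nonneg (by simpa using hj) (exp_pos _).le)
      (sub_one_mul_exp_inv_le hx) M
  have hreal : 6 * (2 * (j : ℝ) - 1) * (j - 1) ^ M ≤ 5 * j ^ M :=
    calc 6 * (2 * (j : ℝ) - 1) * (j - 1) ^ M ≤ 5 * exp (M / j) * (j - 1) ^ M :=
          mul_le_mul_of_nonneg_right (six_mul_two_mul_sub_one_le_five_mul_exp hj hM)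
            (pow_nonneg (by simpa using hj) M)
      _ = 5 * ((j - 1) ^ M * exp (M / j)) := by ring
      _ ≤ 5 * j ^ M := by gcongr
  have hcast : ((6 * (2 * j - 1) * (j - 1) ^ M : ℕ) : ℝ) ≤ ((5 * j ^ M : ℕ) : ℝ) := by
    push_cast [Nat.cast_sub (show 1 ≤ 2 * j by omega), Nat.cast_sub hj]
    exact hreal
  exact_mod_cast hcast

section FunctionCount

variable {α β : Type*} [Fintype α] [DecidableEq α] [Fintype β] [DecidableEq β]

open Fintype Function

def surjNoSingletonFiber (Z : Finset α) : Finset (α → β) :=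
  {f | Surjective f ∧ ∀ x ∈ Z, ∃ x', x' ≠ x ∧ f x' = f x}

theorem card_filter_forall_ne (c : β) :
    #{f : α → β | ∀ x, f x ≠ c} = (card β - 1) ^ card α := by
  have : ({f : α → β | ∀ x, f x ≠ c} : Finset _) = piFinset fun _ => univ.erase c := by
    ext f; simp
  simp [this, card_erase_of_mem]

theorem card_filter_apply_eq_and_forall_ne (y : α) (c : β) :
    #{f : α → β | f y = c ∧ ∀ x, x ≠ y → f x ≠ c} = (card β - 1) ^ (card α - 1) := by
  have : ({f : α → β | f y = c ∧ ∀ x, x ≠ y → f x ≠ c} : Finset _) =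
      piFinset fun x => if x = y then {c} else univ.erase c := by
    ext f
    simp only [mem_filter, mem_univ, true_and, mem_piFinset]
    constructor
    · rintro ⟨hy, hne⟩ x
      split_ifs with hx
      · simp [hx, hy]
      · simpa using hne x hx
    · intro h
      refine ⟨by simpa using h y, fun x hx => by simpa [hx] using h x⟩
  simp [this, apply_ite, prod_ite, filter_ne', card_erase_of_mem]

theorem card_filter_not_surjective_le :
    #{f : α → β | ¬Surjective f} ≤ card β * (card β - 1) ^ card α := by
  calc #{f : α → β | ¬Surjective f}
      ≤ #((univ : Finset β).biUnion fun c => {f : α → β | ∀ x, f x ≠ c}) := by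
        refine card_le_card fun f hf => ?_
        simp only [Surjective, not_forall, mem_filter, mem_univ, true_and] at hf
        simpa using hf
    _ ≤ #(univ : Finset β) * (card β - 1) ^ card α :=
        card_biUnion_le_card_mul _ _ _ fun c _ => (card_filter_forall_ne c).le
    _ = card β * (card β - 1) ^ card α := by rw [card_univ]

theorem card_filter_singleton_fiber_le (y : α) :
    #{f : α → β | ∀ x, x ≠ y → f x ≠ f y} ≤ card β * (card β - 1) ^ (card α - 1) := by
  calc #{f : α → β | ∀ x, x ≠ y → f x ≠ f y}
      ≤ #((univ : Finset β).biUnion fun c =>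
          {f : α → β | f y = c ∧ ∀ x, x ≠ y → f x ≠ c}) := by
        refine card_le_card fun f hf => ?_
        simpa using hf
    _ ≤ #(univ : Finset β) * (card β - 1) ^ (card α - 1) :=
        card_biUnion_le_card_mul _ _ _ fun c _ => (card_filter_apply_eq_and_forall_ne y c).le
    _ = card β * (card β - 1) ^ (card α - 1) := by rw [card_univ]

theorem card_compl_surjNoSingletonFiber_le (Z : Finset α) :
    #(surjNoSingletonFiber (β := β) Z)ᶜ ≤
      card β * (card β - 1) ^ card α + #Z * (card β * (card β - 1) ^ (card α - 1)) := by
  calc #(surjNoSingletonFiber (β := β) Z)ᶜ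
      ≤ #(({f : α → β | ¬Surjective f} : Finset _) ∪
          Z.biUnion fun y => {f : α → β | ∀ x, x ≠ y → f x ≠ f y}) := by
        refine card_le_card fun f hf => ?_
        simp only [surjNoSingletonFiber, compl_filter, mem_filter, mem_univ, true_and,
          not_and, not_forall, not_exists, not_and] at hf
        by_cases hs : Surjective f
        · obtain ⟨y, hy, hlone⟩ := hf hs
          exact mem_union_right _ (mem_biUnion.2 ⟨y, hy, by simpa using hlone⟩)
        · exact mem_union_left _ (by simpa using hs)
    _ ≤ _ := (card_union_le _ _).trans (add_le_add card_filter_not_surjective_le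
        (card_biUnion_le_card_mul _ _ _ fun y _ => card_filter_singleton_fiber_le y))

theorem pow_le_six_mul_card_surjNoSingletonFiber {Z : Finset α} (hβ : 1 ≤ card β)
    (hZ : #Z ≤ card β)
    (hα : ((card β : ℝ) + 1) * logb 2 (card β + 1) ≤ (card α - 1 : ℕ)) :
    card β ^ card α ≤ 6 * #(surjNoSingletonFiber (β := β) Z) := by
  set j := card β
  set m := card α
  have hm : 1 ≤ m := by
    by_contra! h
    have : 0 < ((j : ℝ) + 1) * logb 2 (j + 1) :=
      mul_pos (by positivity) (Real.logb_pos one_lt_two (by norm_cast; omega))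
    simp [Nat.lt_one_iff.1 h] at hα
    linarith
  have hsplit : #(surjNoSingletonFiber (β := β) Z) + #(surjNoSingletonFiber (β := β) Z)ᶜ
      = j ^ m := by
    rw [card_add_card_compl, card_fun]
  have hbad : 6 * #(surjNoSingletonFiber (β := β) Z)ᶜ ≤ 5 * j ^ m := by
    have hkey := six_mul_two_mul_sub_one_mul_pow_le hβ hα
    calc 6 * #(surjNoSingletonFiber (β := β) Z)ᶜ
        ≤ 6 * (j * (j - 1) ^ m + j * (j * (j - 1) ^ (m - 1))) := by
          gcongr
          exact (card_compl_surjNoSingletonFiber_le Z).trans (by gcongr)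
      _ = j * (6 * (2 * j - 1) * (j - 1) ^ (m - 1)) := by
          rw [show 2 * j - 1 = (j - 1) + j by omega, ← Nat.sub_add_cancel hm, pow_succ,
            Nat.add_sub_cancel]
          ring
      _ ≤ j * (5 * j ^ (m - 1)) := by gcongr
      _ = 5 * j ^ m := by
          rw [mul_left_comm, ← pow_succ', Nat.sub_add_cancel hm]
  omega

end FunctionCount

section Partitions

variable {α : Type*} [DecidableEq α]

def IsPartitionOf (X : Finset α) (j : ℕ) (P : Finset (Finset α)) : Prop :=
  #P = j ∧ (∀ B ∈ P, B.Nonempty) ∧ (∀ B ∈ P, ∀ C ∈ P, B ≠ C → Disjoint B C) ∧ P.sup id = X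

instance (X : Finset α) (j : ℕ) : DecidablePred (IsPartitionOf X j) :=
  fun _ => inferInstanceAs (Decidable (_ ∧ _ ∧ _ ∧ _))

theorem IsPartitionOf.subset {X : Finset α} {j : ℕ} {P : Finset (Finset α)}
    (hP : IsPartitionOf X j P) {B : Finset α} (hB : B ∈ P) : B ⊆ X :=
  hP.2.2.2 ▸ le_sup (f := id) hB

theorem IsPartitionOf.disjoint_image_singleton {X T : Finset α} {j : ℕ} {G : Finset (Finset α)}
    (hG : IsPartitionOf X j G) (hT : Disjoint T X) : Disjoint (T.image singleton) G := by
  simp only [disjoint_left, mem_image]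
  rintro _ ⟨i, hi, rfl⟩ hiG
  exact disjoint_left.1 hT hi (hG.subset hiG (mem_singleton_self i))

theorem IsPartitionOf.image_singleton_union {X T : Finset α} {j : ℕ} {G : Finset (Finset α)}
    (hG : IsPartitionOf X j G) (hT : Disjoint T X) :
    IsPartitionOf (T ∪ X) (#T + j) (T.image singleton ∪ G) := by
  have hTG := hG.disjoint_image_singleton hT
  have hsingle : ∀ B ∈ T.image singleton, ∀ C ∈ G, Disjoint B C := by
    rintro _ hB C hC
    obtain ⟨i, hi, rfl⟩ := mem_image.1 hB
    exact disjoint_singleton_left.2 fun hiC => disjoint_left.1 hT hi (hG.subset hC hiC)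
  obtain ⟨hcard, hne, hdisj, hsup⟩ := hG
  refine ⟨?_, ?_, ?_, ?_⟩
  · rw [card_union_of_disjoint hTG, card_image_of_injective _ singleton_injective, hcard]
  · simp only [mem_union, mem_image]
    rintro B (⟨i, -, rfl⟩ | hB)
    exacts [singleton_nonempty i, hne B hB]
  · simp only [mem_union]
    rintro B (hB | hB) C (hC | hC) hBC
    · obtain ⟨i, -, rfl⟩ := mem_image.1 hB
      obtain ⟨i', -, rfl⟩ := mem_image.1 hC
      exact disjoint_singleton.2 fun h => hBC (h ▸ rfl)
    exacts [hsingle B hB C hC, (hsingle C hC B hB).symm, hdisj B hB C hC hBC]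
  · rw [sup_union, sup_image, hsup]
    congr 1
    ext; simp

end Partitions

section Fibers

variable {α β : Type*} [DecidableEq β] {X : Finset α}

open Function

def fiber (f : X → β) (c : β) : Finset α :=
  ({x | f x = c} : Finset X).map (Embedding.subtype _)

theorem mem_fiber {f : X → β} {c : β} {a : α} : a ∈ fiber f c ↔ ∃ h : a ∈ X, f ⟨a, h⟩ = c := by
  simp [fiber]

theorem fiber_injective {f : X → β} (hf : Surjective f) : Injective (fiber f) := by
  intro c c' h
  obtain ⟨x, rfl⟩ := hf c
  obtain ⟨_, hx⟩ := mem_fiber.1 (h ▸ mem_fiber.2 ⟨x.2, rfl⟩ : x.1 ∈ fiber f c')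
  exact hx

theorem injective_fiber : Injective (fiber (X := X) (β := β)) := by
  intro f g h
  funext x
  obtain ⟨_, hx⟩ := mem_fiber.1 (congrFun h (f x) ▸ mem_fiber.2 ⟨x.2, rfl⟩ : x.1 ∈ fiber g (f x))
  exact hx.symm

variable [DecidableEq α] [Fintype β]

def fibers (f : X → β) : Finset (Finset α) :=
  univ.image (fiber f)

theorem isPartitionOf_fibers {f : X → β} (hf : Surjective f) :
    IsPartitionOf X (Fintype.card β) (fibers f) := by
  refine ⟨?_, ?_, ?_, ?_⟩
  · rw [fibers, card_image_of_injective _ (fiber_injective hf), card_univ]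
  · simp only [fibers, mem_image, mem_univ, true_and]
    rintro _ ⟨c, rfl⟩
    obtain ⟨x, rfl⟩ := hf c
    exact ⟨x, mem_fiber.2 ⟨x.2, rfl⟩⟩
  · simp only [fibers, mem_image, mem_univ, true_and]
    rintro _ ⟨c, rfl⟩ _ ⟨c', rfl⟩ hcc'
    refine disjoint_left.2 fun a ha ha' => hcc' ?_
    obtain ⟨h, rfl⟩ := mem_fiber.1 ha
    obtain ⟨_, rfl⟩ := mem_fiber.1 ha'
    rfl
  · ext a
    simp only [fibers, sup_image, mem_sup, mem_univ, true_and, comp_apply, id, mem_fiber]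
    exact ⟨fun ⟨_, h, _⟩ => h, fun h => ⟨_, h, rfl⟩⟩

theorem singleton_notMem_fibers {f : X → β} {x : X} (hx : ∃ x', x' ≠ x ∧ f x' = f x) :
    {x.1} ∉ fibers f := by
  obtain ⟨x', hne, hfx'⟩ := hx
  simp only [fibers, mem_image, mem_univ, true_and, not_exists]
  intro c hc
  obtain ⟨_, rfl⟩ := mem_fiber.1 (hc ▸ mem_singleton_self _ : x.1 ∈ fiber f c)
  have hx' : x'.1 ∈ fiber f (f x) := mem_fiber.2 ⟨x'.2, hfx'⟩
  rw [hc, mem_singleton] at hx'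
  exact hne (Subtype.ext hx')

theorem card_filter_fibers_eq_le (P : Finset (Finset α)) (hP : #P = Fintype.card β) :
    #{f : X → β | Surjective f ∧ fibers f = P} ≤ (Fintype.card β)! := by
  calc #{f : X → β | Surjective f ∧ fibers f = P}
      ≤ #((univ : Finset (β ↪ P)).image fun e c => (e c : Finset α)) := by
        refine card_le_card_of_injOn fiber (fun f hf => ?_) injective_fiber.injOn
        simp only [mem_coe, mem_filter, mem_univ, true_and] at hf
        have hmem : ∀ c, fiber f c ∈ P := fun c => hf.2 ▸ mem_image_of_mem _ (mem_univ c)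
        exact mem_image.2 ⟨⟨fun c => ⟨fiber f c, hmem c⟩,
          fun c c' h => fiber_injective hf.1 (congrArg Subtype.val h)⟩, mem_univ _, rfl⟩
    _ ≤ Fintype.card (β ↪ P) := card_image_le.trans card_univ.le
    _ = (Fintype.card β)! := by
        rw [Fintype.card_embedding_eq, Fintype.card_coe, hP, Nat.descFactorial_self]

variable [Fintype α]

def partitionsNoSingletonIn (X Y : Finset α) (j : ℕ) : Finset (Finset (Finset α)) :=
  {P | IsPartitionOf X j P ∧ ∀ y ∈ Y, {y} ∉ P}

theorem fibers_mem_partitionsNoSingletonIn {Y : Finset α} {f : X → β}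
    (hf : f ∈ surjNoSingletonFiber (Y.subtype (· ∈ X))) :
    fibers f ∈ partitionsNoSingletonIn X Y (Fintype.card β) := by
  simp only [surjNoSingletonFiber, mem_filter, mem_univ, true_and, mem_subtype] at hf
  have hpart := isPartitionOf_fibers hf.1
  refine mem_filter.2 ⟨mem_univ _, hpart, fun y hy hyf => ?_⟩
  by_cases hyX : y ∈ X
  · exact singleton_notMem_fibers (hf.2 ⟨y, hyX⟩ hy) hyf
  · exact hyX (hpart.subset hyf (mem_singleton_self y))

theorem card_surjNoSingletonFiber_le (Y : Finset α) :
    #(surjNoSingletonFiber (β := β) (Y.subtype (· ∈ X))) ≤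
      (Fintype.card β)! * #(partitionsNoSingletonIn X Y (Fintype.card β)) := by
  refine card_le_mul_card_image_of_maps_to (fun f hf => fibers_mem_partitionsNoSingletonIn hf)
    _ fun P hP => (card_le_card fun f hf => ?_).trans
      (card_filter_fibers_eq_le P (mem_filter.1 hP).2.1.1)
  simp only [surjNoSingletonFiber, mem_filter, mem_univ, true_and] at hf ⊢
  exact ⟨hf.1.1, hf.2⟩

theorem stirling_le_six_mul_card_partitionsNoSingletonIn {Y : Finset α} {j : ℕ} (hj : 1 ≤ j)
    (hY : #Y ≤ j) (hX : ((j : ℝ) + 1) * logb 2 (j + 1) ≤ (#X - 1 : ℕ)) :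
    stirling #X j ≤ 6 * #(partitionsNoSingletonIn X Y j) := by
  have hZ : #(Y.subtype (· ∈ X)) ≤ Fintype.card (Fin j) := by
    rw [card_subtype, Fintype.card_fin]
    exact (card_filter_le _ _).trans hY
  have hsurj := pow_le_six_mul_card_surjNoSingletonFiber (β := Fin j) (by simpa) hZ
    (by simpa using hX)
  have hfib := card_surjNoSingletonFiber_le (β := Fin j) (X := X) Y
  simp only [Fintype.card_fin, Fintype.card_coe] at hsurj hfib
  refine Nat.le_of_mul_le_mul_left ?_ (Nat.factorial_pos j)
  calc j ! * stirling #X j ≤ j ^ #X := factorial_mul_stirling_le_pow j #X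
    _ ≤ 6 * (j ! * #(partitionsNoSingletonIn X Y j)) := hsurj.trans (by gcongr)
    _ = j ! * (6 * #(partitionsNoSingletonIn X Y j)) := by ring

end Fibers

section SingletonBlocks

variable {α : Type*} [Fintype α] [DecidableEq α] {S T : Finset α} {j : ℕ}

theorem filter_singleton_mem_image_singleton_union {G : Finset (Finset α)} (hTS : T ⊆ S)
    (hG : G ∈ partitionsNoSingletonIn (univ \ T) (S \ T) j) :
    S.filter (fun i => {i} ∈ T.image singleton ∪ G) = T := by
  obtain ⟨-, hpart, hnone⟩ := mem_filter.1 hG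
  ext i
  simp only [mem_filter, mem_union, mem_image, singleton_inj, exists_eq_right]
  refine ⟨fun ⟨hiS, hi⟩ => hi.resolve_right fun hiG => ?_, fun hi => ⟨hTS hi, Or.inl hi⟩⟩
  have hiT : i ∉ T := (mem_sdiff.1 (hpart.subset hiG (mem_singleton_self i))).2
  exact hnone i (mem_sdiff.2 ⟨hiS, hiT⟩) hiG

theorem sum_card_partitionsNoSingletonIn_le (S : Finset α) (t j : ℕ) :
    ∑ T ∈ S.powersetCard t, #(partitionsNoSingletonIn (univ \ T) (S \ T) j) ≤
      #{F | IsPartitionOf univ (t + j) F ∧ t ≤ #(F ∩ S.image singleton)} := by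
  rw [← card_sigma]
  have hmem : ∀ p ∈ (S.powersetCard t).sigma fun T => partitionsNoSingletonIn (univ \ T) (S \ T) j,
      p.1 ⊆ S ∧ #p.1 = t ∧ p.2 ∈ partitionsNoSingletonIn (univ \ p.1) (S \ p.1) j := by
    simp only [mem_sigma, mem_powersetCard]
    exact fun p ⟨⟨hS, ht⟩, hG⟩ => ⟨hS, ht, hG⟩
  refine card_le_card_of_injOn (fun p => p.1.image singleton ∪ p.2) (fun p hp => ?_) ?_
  · obtain ⟨hTS, hT, hG⟩ := hmem p hp
    have hpart := (mem_filter.1 hG).2.1.image_singleton_union disjoint_sdiff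
    rw [union_sdiff_of_subset (subset_univ _), hT] at hpart
    refine mem_filter.2 ⟨mem_univ _, hpart, ?_⟩
    calc t = #(p.1.image singleton) := by rw [card_image_of_injective _ singleton_injective, hT]
      _ ≤ _ := card_le_card (subset_inter subset_union_left (image_subset_image hTS))
  · rintro ⟨T, G⟩ hp ⟨T', G'⟩ hq (h : T.image singleton ∪ G = T'.image singleton ∪ G')
    obtain ⟨hTS, -, hG⟩ := hmem _ hp
    obtain ⟨hTS', -, hG'⟩ := hmem _ hq
    dsimp only at hTS hG hTS' hG'
    have hT : T = T' := by
      rw [← filter_singleton_mem_image_singleton_union hTS hG, h,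
        filter_singleton_mem_image_singleton_union hTS' hG']
    subst hT
    suffices G = G' by rw [this]
    rw [← union_sdiff_cancel_left
        ((mem_filter.1 hG).2.1.disjoint_image_singleton disjoint_sdiff), h,
      union_sdiff_cancel_left ((mem_filter.1 hG').2.1.disjoint_image_singleton disjoint_sdiff)]

theorem choose_mul_stirling_le_six_mul_card {t k : ℕ} (htk : t + 1 ≤ k) (hS : #S ≤ k)
    (hα : (((k - t : ℕ) : ℝ) + 1) * logb 2 ((k - t : ℕ) + 1) ≤ (Fintype.card α - t - 1 : ℕ)) :
    (#S).choose t * stirling (Fintype.card α - t) (k - t) ≤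
      6 * #{F | IsPartitionOf univ k F ∧ t ≤ #(F ∩ S.image singleton)} := by
  have hpart : ∀ T ∈ S.powersetCard t, stirling (Fintype.card α - t) (k - t) ≤
      6 * #(partitionsNoSingletonIn (univ \ T) (S \ T) (k - t)) := by
    intro T hT
    obtain ⟨hTS, hTt⟩ := mem_powersetCard.1 hT
    have hcard : #(univ \ T) = Fintype.card α - t := by rw [card_univ_sdiff, hTt]
    rw [← hcard]
    exact stirling_le_six_mul_card_partitionsNoSingletonIn (by omega)
      (by rw [card_sdiff_of_subset hTS]; omega) (by rwa [hcard])
  calc (#S).choose t * stirling (Fintype.card α - t) (k - t)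
      = ∑ T ∈ S.powersetCard t, stirling (Fintype.card α - t) (k - t) := by
        rw [sum_const, card_powersetCard, smul_eq_mul]
    _ ≤ 6 * ∑ T ∈ S.powersetCard t, #(partitionsNoSingletonIn (univ \ T) (S \ T) (k - t)) := by
        rw [mul_sum]; exact sum_le_sum hpart
    _ ≤ 6 * #{F | IsPartitionOf univ k F ∧ t ≤ #(F ∩ S.image singleton)} := by
        grw [sum_card_partitionsNoSingletonIn_le S t (k - t), Nat.add_sub_cancel' (by omega)]

end SingletonBlocks

theorem le_and_mul_logb_le_of_Lfun_le {n k t : ℕ} (htk : t + 1 ≤ k) (hn : Lfun k t ≤ n) :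
    k + 2 ≤ n ∧ (((k - t : ℕ) : ℝ) + 1) * logb 2 ((k - t : ℕ) + 1) ≤ (n - t - 1 : ℕ) := by
  set j := k - t
  have hk : (k : ℝ) - t = j := by rw [Nat.cast_sub (by omega)]
  have hj : (1 : ℝ) ≤ j := by exact_mod_cast (by omega : 1 ≤ j)
  have hmono : logb 2 (j + 1) ≤ logb 2 ((t + 1) * (j + 1)) :=
    Real.logb_le_logb_of_le one_lt_two (by positivity) (by nlinarith)
  have hone : 1 ≤ logb 2 (j + 1) :=
    (Real.le_logb_iff_rpow_le one_lt_two (by positivity)).2 (by norm_num; linarith)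
  rw [Lfun, hk] at hn
  have hL : (t : ℝ) + 1 + (j + 1) * logb 2 (j + 1) ≤ n := by nlinarith
  have hkn : k + 2 ≤ n := by
    have : (k : ℝ) + 2 ≤ n := by rw [show (k : ℝ) = t + j by linarith]; nlinarith
    exact_mod_cast this
  refine ⟨hkn, ?_⟩
  rw [show n - t - 1 = n - (t + 1) by omega, Nat.cast_sub (by omega : t + 1 ≤ n)]
  push_cast
  linarith

theorem stmt_17_general (n k t s : ℕ) (hkt : t + 2 ≤ k) (hs2 : s ≤ k)
    (hn : (n : ℝ) ≥ Lfun k t)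
    (M : Finset (Finset (Fin n)))
    (hM : M = (Finset.univ.filter fun i : Fin n => (i : ℕ) < s).image fun i => {i}) :
    ({F : Finset (Finset (Fin n)) | IsKPartition n k F ∧ t ≤ (F ∩ M).card}.ncard : ℝ) ≥
      (1 / 6) * Nat.choose s t * stirling (n - t) (k - t) := by
  obtain ⟨hkn, hlog⟩ := le_and_mul_logb_le_of_Lfun_le (by omega : t + 1 ≤ k) hn
  set S : Finset (Fin n) := {i | (i : ℕ) < s}
  have hS : #S = s := by rw [Fin.card_filter_val_lt]; omega
  have hset : {F | IsKPartition n k F ∧ t ≤ #(F ∩ M)} =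
      ↑({F | IsPartitionOf univ k F ∧ t ≤ #(F ∩ S.image singleton)} : Finset _) := by
    rw [coe_filter, hM]
    simp only [mem_univ, true_and]
    rfl
  have hcount := choose_mul_stirling_le_six_mul_card (S := S) (t := t) (k := k) (by omega)
    (by omega) (by simpa using hlog)
  rw [hS, Fintype.card_fin, ← Set.ncard_coe_finset, ← hset] at hcount
  have hreal : ((s.choose t * stirling (n - t) (k - t) : ℕ) : ℝ) ≤
      ((6 * {F | IsKPartition n k F ∧ t ≤ #(F ∩ M)}.ncard : ℕ) : ℝ) := by exact_mod_cast hcount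
  push_cast at hreal
  linarith

theorem stmt_17 (n k t s : ℕ) (hkt : t + 2 ≤ k) (hs1 : t + 2 ≤ s) (hs2 : s ≤ k)
    (hn : (n : ℝ) ≥ Lfun k t)
    (M : Finset (Finset (Fin n)))
    (hM : M = (Finset.univ.filter fun i : Fin n => (i : ℕ) < s).image fun i => {i}) :
    ({F : Finset (Finset (Fin n)) | IsKPartition n k F ∧ t ≤ (F ∩ M).card}.ncard : ℝ) ≥
      (1 / 6) * Nat.choose s t * stirling (n - t) (k - t) :=
  stmt_17_general n k t s hkt hs2 hn M hM
end
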